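/- Let (H,R) be a quasitriangular crossed Hopf π-coalgebra with Drinfeld elements u_α. Then for all α,β ∈ π, φ_β(u_α) = u_{βαβ⁻¹}. -/

import Mathlib

/- Crossed Hopf π-coalgebras (Turaev coalgebras). -/

open TensorProduct

universe u

variable (k : Type u) [Field k] (π : Type u) [Group π]

/-- Cast along an equality of indices, as a `k`-linear map. -/
def lcast (A : π → Type u) [∀ α, Ring (A α)] [∀ α, Algebra k (A α)]
    {α β : π} (h : α = β) : A α →ₗ[k] A β where
  toFun x := cast (congrArg A h) x
  map_add' := by subst h; intro x y; rfl
  map_smul' := by subst h; intro c x; rfl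

/-- A crossed Hopf `π`-coalgebra (Turaev coalgebra) structure on a family of
`k`-algebras `A α`. -/
structure TCoalgStruct (A : π → Type u) [∀ α, Ring (A α)] [∀ α, Algebra k (A α)] where
  /-- comultiplication -/
  Δ : ∀ α β : π, A (α * β) →ₐ[k] (A α ⊗[k] A β)
  /-- counit -/
  ε : A 1 →ₐ[k] k
  /-- antipode -/
  s : ∀ α : π, A α →ₗ[k] A α⁻¹
  /-- conjugation -/
  φ : ∀ β α : π, A α →ₐ[k] A (β * α * β⁻¹)
  φ_bij : ∀ β α : π, Function.Bijective (φ β α)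
  coassoc : ∀ (α β γ : π) (h : A (α * β * γ)),
    (TensorProduct.assoc k (A α) (A β) (A γ))
        (TensorProduct.map (Δ α β).toLinearMap LinearMap.id (Δ (α * β) γ h)) =
      TensorProduct.map LinearMap.id (Δ β γ).toLinearMap
        (Δ α (β * γ) (cast (congrArg A (mul_assoc α β γ)) h))
  counit_left : ∀ (α : π) (h : A (1 * α)),
    TensorProduct.lid k (A α)
        (TensorProduct.map (ε).toLinearMap LinearMap.id (Δ 1 α h)) =
      cast (congrArg A (one_mul α)) h
  counit_right : ∀ (α : π) (h : A (α * 1)),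
    TensorProduct.rid k (A α)
        (TensorProduct.map LinearMap.id (ε).toLinearMap (Δ α 1 h)) =
      cast (congrArg A (mul_one α)) h
  antipode_right : ∀ (α : π) (h : A (α * α⁻¹)),
    LinearMap.mul' k (A α)
        (TensorProduct.map LinearMap.id
          ((lcast k π A (inv_inv α)).comp (s α⁻¹)) (Δ α α⁻¹ h)) =
      algebraMap k (A α) (ε (cast (congrArg A (by group : α * α⁻¹ = 1)) h))
  antipode_left : ∀ (α : π) (h : A (α⁻¹ * α)),
    LinearMap.mul' k (A α)
        (TensorProduct.map ((lcast k π A (inv_inv α)).comp (s α⁻¹)) LinearMap.id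
          (Δ α⁻¹ α h)) =
      algebraMap k (A α) (ε (cast (congrArg A (by group : α⁻¹ * α = 1)) h))
  φ_mul : ∀ (β γ α : π) (h : A α),
    cast (congrArg A (by group : β * (γ * α * γ⁻¹) * β⁻¹ = β * γ * α * (β * γ)⁻¹))
        (φ β (γ * α * γ⁻¹) (φ γ α h)) = φ (β * γ) α h
  φ_comul : ∀ (γ α β : π) (h : A (α * β)),
    TensorProduct.map (φ γ α).toLinearMap (φ γ β).toLinearMap (Δ α β h) =
      Δ (γ * α * γ⁻¹) (γ * β * γ⁻¹)
        (cast (congrArg A (by group : γ * (α * β) * γ⁻¹ = γ * α * γ⁻¹ * (γ * β * γ⁻¹)))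
          (φ γ (α * β) h))
  φ_counit : ∀ (γ : π) (h : A 1),
    ε (cast (congrArg A (by group : γ * 1 * γ⁻¹ = 1)) (φ γ 1 h)) = ε h

/-- A quasitriangular structure (universal R-matrix) on a crossed Hopf
`π`-coalgebra. -/
structure QTStruct (A : π → Type u) [∀ α, Ring (A α)] [∀ α, Algebra k (A α)]
    (T : TCoalgStruct k π A) where
  /-- the universal R-matrix -/
  R : ∀ α β : π, A α ⊗[k] A β
  /-- its inverse -/
  Rinv : ∀ α β : π, A α ⊗[k] A β
  R_inv_left : ∀ α β : π, Rinv α β * R α β = 1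
  R_inv_right : ∀ α β : π, R α β * Rinv α β = 1
  R_rel1 : ∀ (α β : π) (h : A (α * β)),
    R α β * T.Δ α β h =
      ((TensorProduct.comm k (A β) (A α))
        (TensorProduct.map
          ((lcast k π A (by group : α⁻¹ * (α * β * α⁻¹) * α⁻¹⁻¹ = β)).comp
            (T.φ α⁻¹ (α * β * α⁻¹)).toLinearMap) LinearMap.id
          (T.Δ (α * β * α⁻¹) α
            (cast (congrArg A (by group : α * β = α * β * α⁻¹ * α)) h)))) * R α β
  R_rel2 : ∀ α β γ : π,
    TensorProduct.map LinearMap.id (T.Δ β γ).toLinearMap (R α (β * γ)) =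
      (TensorProduct.map LinearMap.id ((TensorProduct.mk k (A β) (A γ)) 1) (R α γ)) *
      (TensorProduct.map LinearMap.id ((TensorProduct.mk k (A β) (A γ)).flip 1) (R α β))
  R_rel3 : ∀ α β γ : π,
    TensorProduct.map (T.Δ α β).toLinearMap LinearMap.id (R (α * β) γ) =
      (TensorProduct.map ((TensorProduct.mk k (A α) (A β)).flip 1) LinearMap.id
        (TensorProduct.map
          ((lcast k π A (by group : β * (β⁻¹ * α * β) * β⁻¹ = α)).comp
            (T.φ β (β⁻¹ * α * β)).toLinearMap) LinearMap.id (R (β⁻¹ * α * β) γ))) *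
      (TensorProduct.map ((TensorProduct.mk k (A α) (A β)) 1) LinearMap.id (R β γ))
  R_phi : ∀ α β γ : π,
    TensorProduct.map (T.φ α β).toLinearMap (T.φ α γ).toLinearMap (R β γ) =
      R (α * β * α⁻¹) (α * γ * α⁻¹)

/-- The `α`-th Drinfeld element `u_α = (s_{α⁻¹} ∘ φ_α)(ζ_{(α⁻¹).i}) · ξ_{(α).i}`
of a quasitriangular crossed Hopf `π`-coalgebra. -/
noncomputable def drinfeld
    (A : π → Type u) [∀ α, Ring (A α)] [∀ α, Algebra k (A α)]
    (T : TCoalgStruct k π A) (Q : QTStruct k π A T) (α : π) : A α :=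
  LinearMap.mul' k (A α)
    ((TensorProduct.comm k (A α) (A α))
      (TensorProduct.map LinearMap.id
        ((lcast k π A (inv_inv α)).comp ((T.s α⁻¹).comp
          ((lcast k π A (by group : α * α⁻¹ * α⁻¹ = α⁻¹)).comp
            (T.φ α α⁻¹).toLinearMap)))
        (Q.R α α⁻¹)))

/-! `φ_β` is an algebra map, so `φ_β(u_α) = φ_β(S_α φ_α(ζ_i)) · φ_β(ξ_i)`. The antipode commutes
with conjugation, `φ_β ∘ S_α = S_{βαβ⁻¹} ∘ φ_β`: both sides are convolution inverses of `φ_β`, one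
on the left and one on the right, and these agree by associativity of convolution. Together with
`φ_β φ_α = φ_{βαβ⁻¹} φ_β` and `(φ_β ⊗ φ_β)(R_{α,α⁻¹}) = R_{βαβ⁻¹,βα⁻¹β⁻¹}`, this turns
`φ_β(u_α)` into `u_{βαβ⁻¹}`. -/

section

set_option linter.unusedSectionVars false

variable {k π} {A : π → Type u} [∀ α, Ring (A α)] [∀ α, Algebra k (A α)]

theorem lcast_self {α : π} (h : α = α) : lcast k π A h = LinearMap.id := rfl

theorem lcast_lcast {α β γ : π} (h : α = β) (h' : β = γ) (x : A α) :
    lcast k π A h' (lcast k π A h x) = lcast k π A (h.trans h') x := by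
  subst h h'; rfl

theorem lcast_comp_lcast {α β γ : π} (h : α = β) (h' : β = γ) :
    lcast k π A h' ∘ₗ lcast k π A h = lcast k π A (h.trans h') :=
  LinearMap.ext (lcast_lcast h h')

theorem algHom_mul' {B C : Type*} [Ring B] [Ring C] [Algebra k B] [Algebra k C]
    (ψ : B →ₐ[k] C) (t : B ⊗[k] B) :
    ψ (LinearMap.mul' k B t) = LinearMap.mul' k C (map ψ.toLinearMap ψ.toLinearMap t) := by
  induction t using TensorProduct.induction_on with
  | zero => simp
  | tmul a b => simp
  | add x y hx hy => simp only [map_add, hx, hy]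

namespace TCoalgStruct

variable (T : TCoalgStruct k π A)

theorem φ_lcast (β : π) {α α' : π} (h : α = α') (x : A α) :
    T.φ β α' (lcast k π A h x) = lcast k π A (by rw [h]) (T.φ β α x) := by
  subst h; rfl

theorem φ_eq_lcast_φ {β β' : π} (h : β = β') (α : π) (x : A α) :
    T.φ β' α x = lcast k π A (by rw [h]) (T.φ β α x) := by
  subst h; rfl

theorem φ_φ (β γ α : π) (x : A α) :
    T.φ β (γ * α * γ⁻¹) (T.φ γ α x) = lcast k π A (by group) (T.φ (β * γ) α x) := by
  rw [← T.φ_mul]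
  simp [lcast]

theorem φ_φ_conj (β γ α : π) (x : A α) :
    T.φ β (γ * α * γ⁻¹) (T.φ γ α x) =
      lcast k π A (by group) (T.φ (β * γ * β⁻¹) (β * α * β⁻¹) (T.φ β α x)) := by
  rw [T.φ_φ, T.φ_φ, T.φ_eq_lcast_φ (by group : β * γ = β * γ * β⁻¹ * β), lcast_lcast,
    lcast_lcast]

variable {B : Type*} [Ring B] [Algebra k B]

def conv {α β : π} (f : A α →ₗ[k] B) (g : A β →ₗ[k] B) : A (α * β) →ₗ[k] B :=
  LinearMap.mul' k B ∘ₗ map f g ∘ₗ (T.Δ α β).toLinearMap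

variable (B) in
def convUnit {γ : π} (h : γ = 1) : A γ →ₗ[k] B :=
  Algebra.linearMap k B ∘ₗ T.ε.toLinearMap ∘ₗ lcast k π A h

theorem conv_assoc {α β γ : π} (f : A α →ₗ[k] B) (g : A β →ₗ[k] B) (h : A γ →ₗ[k] B) :
    T.conv (T.conv f g) h = T.conv f (T.conv g h) ∘ₗ lcast k π A (mul_assoc α β γ) := by
  have mul_three : LinearMap.mul' k B ∘ₗ map (LinearMap.mul' k B ∘ₗ map f g) h =
      LinearMap.mul' k B ∘ₗ map f (LinearMap.mul' k B ∘ₗ map g h) ∘ₗ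
        (TensorProduct.assoc k (A α) (A β) (A γ)).toLinearMap := by
    apply TensorProduct.ext_threefold
    intro a b c
    simp [mul_assoc]
  ext x
  calc T.conv (T.conv f g) h x
      = (LinearMap.mul' k B ∘ₗ map (LinearMap.mul' k B ∘ₗ map f g) h)
          (map (T.Δ α β).toLinearMap LinearMap.id (T.Δ (α * β) γ x)) := by
        rw [LinearMap.comp_apply, map_map]; rfl
    _ = (LinearMap.mul' k B ∘ₗ map f (LinearMap.mul' k B ∘ₗ map g h))
          (TensorProduct.assoc k (A α) (A β) (A γ)
            (map (T.Δ α β).toLinearMap LinearMap.id (T.Δ (α * β) γ x))) := by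
        rw [mul_three]; rfl
    _ = T.conv f (T.conv g h) (lcast k π A (mul_assoc α β γ) x) := by
        rw [T.coassoc, LinearMap.comp_apply, map_map]; rfl

theorem convUnit_conv {γ : π} (hγ : γ = 1) {β : π} (g : A β →ₗ[k] B) :
    T.conv (T.convUnit B hγ) g = g ∘ₗ lcast k π A (by rw [hγ, one_mul]) := by
  subst hγ
  have counit_mul : LinearMap.mul' k B ∘ₗ map (T.convUnit B rfl) g =
      g ∘ₗ (TensorProduct.lid k (A β)).toLinearMap ∘ₗ map T.ε.toLinearMap LinearMap.id := by
    refine TensorProduct.ext' fun a b => ?_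
    simp [convUnit, lcast_self, Algebra.algebraMap_eq_smul_one]
  ext x
  rw [conv, ← LinearMap.comp_assoc, counit_mul]
  exact congrArg g (T.counit_left β x)

theorem conv_convUnit {α : π} (f : A α →ₗ[k] B) {γ : π} (hγ : γ = 1) :
    T.conv f (T.convUnit B hγ) = f ∘ₗ lcast k π A (by rw [hγ, mul_one]) := by
  subst hγ
  have mul_counit : LinearMap.mul' k B ∘ₗ map f (T.convUnit B rfl) =
      f ∘ₗ (TensorProduct.rid k (A α)).toLinearMap ∘ₗ map LinearMap.id T.ε.toLinearMap := by
    refine TensorProduct.ext' fun a b => ?_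
    simp [convUnit, lcast_self, Algebra.algebraMap_eq_smul_one]
  ext x
  rw [conv, ← LinearMap.comp_assoc, mul_counit]
  exact congrArg f (T.counit_right α x)

theorem eq_of_conv_eq_convUnit {α β : π} {f h : A α →ₗ[k] B} {g : A β →ₗ[k] B}
    (hαβ : α * β = 1) (hβα : β * α = 1)
    (hfg : T.conv f g = T.convUnit B hαβ) (hgh : T.conv g h = T.convUnit B hβα) : f = h := by
  have key := T.conv_assoc f g h
  rw [hfg, hgh, T.convUnit_conv, T.conv_convUnit, LinearMap.comp_assoc, lcast_comp_lcast] at key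
  ext x
  simpa [lcast_lcast, lcast_self] using
    (LinearMap.congr_fun key (lcast k π A (by rw [hαβ, one_mul] : α * β * α = α).symm x)).symm

theorem algHom_comp_conv {C : Type*} [Ring C] [Algebra k C] (ψ : B →ₐ[k] C) {α β : π}
    (f : A α →ₗ[k] B) (g : A β →ₗ[k] B) :
    ψ.toLinearMap ∘ₗ T.conv f g = T.conv (ψ.toLinearMap ∘ₗ f) (ψ.toLinearMap ∘ₗ g) := by
  ext x
  simp only [conv, LinearMap.comp_apply, AlgHom.toLinearMap_apply, algHom_mul', map_map]

theorem algHom_comp_convUnit {C : Type*} [Ring C] [Algebra k C] (ψ : B →ₐ[k] C) {γ : π}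
    (h : γ = 1) : ψ.toLinearMap ∘ₗ T.convUnit B h = T.convUnit C h := by
  ext x
  simp [convUnit]

theorem conv_comp_of_comul {α β α' β' : π} (f : A α' →ₗ[k] B) (g : A β' →ₗ[k] B)
    (p : A α →ₗ[k] A α') (q : A β →ₗ[k] A β') (L : A (α * β) →ₗ[k] A (α' * β'))
    (h : map p q ∘ₗ (T.Δ α β).toLinearMap = (T.Δ α' β').toLinearMap ∘ₗ L) :
    T.conv (f ∘ₗ p) (g ∘ₗ q) = T.conv f g ∘ₗ L := by
  simp only [conv, map_comp, LinearMap.comp_assoc, h]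

theorem map_φ_Δ (β α γ : π) {γ' : π} (h : β * γ * β⁻¹ = γ') (x : A (α * γ)) :
    map (T.φ β α).toLinearMap (lcast k π A h ∘ₗ (T.φ β γ).toLinearMap) (T.Δ α γ x) =
      T.Δ (β * α * β⁻¹) γ' (lcast k π A (by rw [← h]; group) (T.φ β (α * γ) x)) := by
  subst h
  rw [lcast_self, LinearMap.id_comp]
  exact T.φ_comul β α γ x

theorem convUnit_comp_φ {γ γ' : π} (hγ : γ = 1) (hγ' : γ' = 1) (β : π)
    (e : β * γ * β⁻¹ = γ') :
    T.convUnit B hγ' ∘ₗ lcast k π A e ∘ₗ (T.φ β γ).toLinearMap = T.convUnit B hγ := by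
  subst hγ hγ'
  ext x
  exact congrArg (algebraMap k B) (T.φ_counit β x)

def S (γ : π) : A γ⁻¹ →ₗ[k] A γ :=
  lcast k π A (inv_inv γ) ∘ₗ T.s γ⁻¹

theorem conv_S_id (γ : π) :
    T.conv (T.S γ) LinearMap.id = T.convUnit (A γ) (inv_mul_cancel γ) :=
  LinearMap.ext (T.antipode_left γ)

theorem conv_id_S (γ : π) :
    T.conv LinearMap.id (T.S γ) = T.convUnit (A γ) (mul_inv_cancel γ) :=
  LinearMap.ext (T.antipode_right γ)

/-- `φ β ∘ S` and `S ∘ φ β` are a left and a right convolution inverse of `φ β`. -/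
theorem φ_comp_S (β γ : π) :
    (T.φ β γ).toLinearMap ∘ₗ T.S γ =
      T.S (β * γ * β⁻¹) ∘ₗ lcast k π A (by group : β * γ⁻¹ * β⁻¹ = (β * γ * β⁻¹)⁻¹) ∘ₗ
        (T.φ β γ⁻¹).toLinearMap := by
  apply T.eq_of_conv_eq_convUnit (g := (T.φ β γ).toLinearMap) (inv_mul_cancel γ)
    (mul_inv_cancel γ)
  · calc T.conv ((T.φ β γ).toLinearMap ∘ₗ T.S γ) ((T.φ β γ).toLinearMap ∘ₗ LinearMap.id)
        = (T.φ β γ).toLinearMap ∘ₗ T.conv (T.S γ) LinearMap.id := (T.algHom_comp_conv ..).symm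
      _ = _ := by rw [conv_S_id, algHom_comp_convUnit]
  · calc T.conv (LinearMap.id ∘ₗ (T.φ β γ).toLinearMap)
          (T.S (β * γ * β⁻¹) ∘ₗ lcast k π A _ ∘ₗ (T.φ β γ⁻¹).toLinearMap)
        = T.conv LinearMap.id (T.S (β * γ * β⁻¹)) ∘ₗ lcast k π A (by group) ∘ₗ
            (T.φ β (γ * γ⁻¹)).toLinearMap :=
          T.conv_comp_of_comul _ _ _ _ _ (LinearMap.ext (T.map_φ_Δ β γ γ⁻¹ _))
      _ = _ := by rw [conv_id_S, convUnit_comp_φ]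

def drinfeldMap (α : π) : A α⁻¹ →ₗ[k] A α :=
  T.S α ∘ₗ lcast k π A (by group : α * α⁻¹ * α⁻¹ = α⁻¹) ∘ₗ (T.φ α α⁻¹).toLinearMap

theorem φ_comp_drinfeldMap (β α : π) :
    (T.φ β α).toLinearMap ∘ₗ T.drinfeldMap α =
      T.drinfeldMap (β * α * β⁻¹) ∘ₗ
        lcast k π A (by group : β * α⁻¹ * β⁻¹ = (β * α * β⁻¹)⁻¹) ∘ₗ (T.φ β α⁻¹).toLinearMap := by
  rw [drinfeldMap, ← LinearMap.comp_assoc, φ_comp_S]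
  ext x
  simp only [drinfeldMap, LinearMap.comp_apply, AlgHom.toLinearMap_apply, φ_lcast]
  rw [T.φ_φ_conj β α α⁻¹ x, lcast_lcast, lcast_lcast, lcast_lcast]

end TCoalgStruct

namespace QTStruct

variable {T : TCoalgStruct k π A} (Q : QTStruct k π A T)

theorem map_lcast_R (α : π) {β β' : π} (h : β = β') :
    map LinearMap.id (lcast k π A h) (Q.R α β) = Q.R α β' := by
  subst h
  simp [lcast_self]

theorem map_φ_R_inv (β α : π) :
    map (T.φ β α).toLinearMap
        (lcast k π A (by group : β * α⁻¹ * β⁻¹ = (β * α * β⁻¹)⁻¹) ∘ₗ (T.φ β α⁻¹).toLinearMap)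
        (Q.R α α⁻¹) =
      Q.R (β * α * β⁻¹) (β * α * β⁻¹)⁻¹ := by
  rw [← LinearMap.id_comp (T.φ β α).toLinearMap, map_comp, LinearMap.comp_apply, Q.R_phi,
    map_lcast_R]

end QTStruct

end

/-- the conjugation maps the Drinfeld elements to each other:
`φ_β(u_α) = u_{βαβ⁻¹}`. -/
theorem phi_drinfeld
    (A : π → Type u) [∀ α, Ring (A α)] [∀ α, Algebra k (A α)]
    (T : TCoalgStruct k π A) (Q : QTStruct k π A T) (α β : π) :
    T.φ β α (drinfeld k π A T Q α) = drinfeld k π A T Q (β * α * β⁻¹) := by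
  calc T.φ β α (drinfeld k π A T Q α)
      = LinearMap.mul' k _ (TensorProduct.comm k _ _ (map (T.φ β α).toLinearMap
          ((T.φ β α).toLinearMap ∘ₗ T.drinfeldMap α) (Q.R α α⁻¹))) := by
        rw [drinfeld, algHom_mul', map_comm, map_map, LinearMap.comp_id]
        rfl
    _ = LinearMap.mul' k _ (TensorProduct.comm k _ _ (map LinearMap.id
          (T.drinfeldMap (β * α * β⁻¹)) (Q.R (β * α * β⁻¹) (β * α * β⁻¹)⁻¹))) := by
        rw [T.φ_comp_drinfeldMap, ← Q.map_φ_R_inv, map_map, LinearMap.id_comp]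
    _ = drinfeld k π A T Q (β * α * β⁻¹) := rfl
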